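/- (Tensor product, graded part) Let γ′ be a self-adjoint unitary on H′ with γ′a′ = a′γ′ for all a′ ∈ A′, γ′D′ = −D′γ′, and γ′J′ = J′γ′. Suppose D″ on H″ satisfies the twisted first-order condition with twist ν″ and real structure J″, and [a′, J′b′J′⁻¹] = 0 on H′. Then D = γ′⊗D″ satisfies the twisted first-order condition on H′⊗H″ with twist 1⊗ν″ and J = J′⊗J″: [γ′⊗D″, a′⊗a″]·J((1⊗ν″)(b′⊗b″)(1⊗ν″)⁻¹)J⁻¹ = J((1⊗ν″)⁻¹(b′⊗b″)(1⊗ν″))J⁻¹·[γ′⊗D″, a′⊗a″]. -/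

import Mathlib

/-!
On a pure tensor `x ⊗ y` both sides of the twisted first-order condition for `γ′ ⊗ D″` split into
a first and a second factor. The second factors agree by the twisted first-order condition for
`D″`. In the first factor one needs `γ′ a′ (J′b′J′⁻¹) = (J′b′J′⁻¹) γ′ a′`: the zero-order condition
moves `a′` past `J′b′J′⁻¹`, and `γ′` commutes with `J′b′J′⁻¹` because it commutes with `J′`
(hence with `J′⁻¹`) and with `b′ ∈ A′`. Both sides are additive in the vector, so the pure tensors
suffice.
-/

open scoped TensorProduct

/-- The operator `f ⊗ g` on the (algebraic) tensor product `H' ⊗ H''`. -/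
noncomputable def opTensor {H' H'' : Type*}
    [NormedAddCommGroup H'] [InnerProductSpace ℂ H']
    [NormedAddCommGroup H''] [InnerProductSpace ℂ H'']
    (f : H' →L[ℂ] H') (g : H'' →L[ℂ] H'') : H' ⊗[ℂ] H'' →ₗ[ℂ] H' ⊗[ℂ] H'' :=
  TensorProduct.map f.toLinearMap g.toLinearMap

theorem TensorProduct.eq_of_map_add_of_tmul {R M N P : Type*} [CommSemiring R]
    [AddCommMonoid M] [Module R M] [AddCommMonoid N] [Module R N] [Add P]
    {f g : M ⊗[R] N → P} (hf : ∀ u v, f (u + v) = f u + f v) (hg : ∀ u v, g (u + v) = g u + g v)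
    (h : ∀ x y, f (x ⊗ₜ y) = g (x ⊗ₜ y)) : f = g := by
  funext v
  induction v using TensorProduct.induction_on with
  | zero => rw [← TensorProduct.zero_tmul M (0 : N), h]
  | tmul x y => exact h x y
  | add u w hu hw => rw [hf, hg, hu, hw]

theorem Function.Commute.conj {α : Type*} {γ J Jinv b : α → α} (hJ : Function.Commute γ J)
    (hJinv : Function.RightInverse Jinv J) (hJinv' : Function.LeftInverse Jinv J)
    (hb : Function.Commute γ b) : Function.Commute γ (J ∘ b ∘ Jinv) :=
  hJ.comp_right (hb.comp_right (hJ.inverses_right hJinv hJinv'))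

theorem ContinuousLinearMap.function_commute_of_comp_eq {R M : Type*} [Semiring R]
    [TopologicalSpace M] [AddCommMonoid M] [Module R M] {f g : M →L[R] M} (h : f.comp g = g.comp f) :
    Function.Commute f g :=
  fun x ↦ DFunLike.congr_fun h x

section opTensor

variable {H' H'' : Type*} [NormedAddCommGroup H'] [InnerProductSpace ℂ H']
  [NormedAddCommGroup H''] [InnerProductSpace ℂ H'']

@[simp]
theorem opTensor_tmul (f : H' →L[ℂ] H') (g : H'' →L[ℂ] H'') (x : H') (y : H'') :
    opTensor f g (x ⊗ₜ y) = f x ⊗ₜ g y :=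
  rfl

theorem opTensor_commutator_tmul {γ a : H' →L[ℂ] H'} (hγa : Function.Commute γ a)
    (D b : H'' →L[ℂ] H'') (x : H') (y : H'') :
    (opTensor γ D ∘ₗ opTensor a b - opTensor a b ∘ₗ opTensor γ D) (x ⊗ₜ y)
      = γ (a x) ⊗ₜ (D (b y) - b (D y)) := by
  simp only [LinearMap.sub_apply, LinearMap.comp_apply, opTensor_tmul, ← hγa x,
    TensorProduct.tmul_sub]

end opTensor

theorem stmt13_general {H' H'' : Type*}
    [NormedAddCommGroup H'] [InnerProductSpace ℂ H'] [CompleteSpace H']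
    [NormedAddCommGroup H''] [InnerProductSpace ℂ H''] [CompleteSpace H'']
    (A' : StarSubalgebra ℂ (H' →L[ℂ] H')) (A'' : StarSubalgebra ℂ (H'' →L[ℂ] H''))
    (J' J'inv : H' → H')
    (hJ'1 : ∀ x, J' (J'inv x) = x) (hJ'2 : ∀ x, J'inv (J' x) = x)
    (J'' J''inv : H'' → H'')
    -- the grading `γ′`: a self-adjoint unitary commuting with `A′` and `J′`,
    -- anticommuting with `D′`
    (γ' : H' →L[ℂ] H')
    (hγA : ∀ a' ∈ A', γ'.comp a' = a'.comp γ')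
    (hγJ : ∀ x, γ' (J' x) = J' (γ' x))
    -- zero-order condition on the first factor
    (h0' : ∀ a' ∈ A', ∀ b' ∈ A', ∀ x,
      a' (J' (b' (J'inv x))) = J' (b' (J'inv (a' x))))
    -- twisted first-order condition for `D″` with twist `ν″` on the second factor
    (D'' ν'' ν''inv : H'' →L[ℂ] H'')
    (h1'' : ∀ a'' ∈ A'', ∀ b'' ∈ A'', ∀ y,
      (D'' (a'' (J'' (ν'' (b'' (ν''inv (J''inv y))))))
          - a'' (D'' (J'' (ν'' (b'' (ν''inv (J''inv y)))))))
        = J'' (ν''inv (b'' (ν'' (J''inv (D'' (a'' y) - a'' (D'' y)))))))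
    -- `J = J′⊗J″` and its inverse `J⁻¹ = J′⁻¹⊗J″⁻¹`
    (J Jinv : H' ⊗[ℂ] H'' → H' ⊗[ℂ] H'')
    (hJadd : ∀ u v, J (u + v) = J u + J v)
    (hJinvadd : ∀ u v, Jinv (u + v) = Jinv u + Jinv v)
    (hJ : ∀ (x : H') (y : H''), J (x ⊗ₜ[ℂ] y) = J' x ⊗ₜ[ℂ] J'' y)
    (hJinv : ∀ (x : H') (y : H''), Jinv (x ⊗ₜ[ℂ] y) = J'inv x ⊗ₜ[ℂ] J''inv y) :
    ∀ a' ∈ A', ∀ a'' ∈ A'', ∀ b' ∈ A', ∀ b'' ∈ A'', ∀ v,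
      (opTensor γ' D'' ∘ₗ opTensor a' a'' - opTensor a' a'' ∘ₗ opTensor γ' D'')
          (J (opTensor 1 ν'' (opTensor b' b'' (opTensor 1 ν''inv (Jinv v)))))
        = J (opTensor 1 ν''inv (opTensor b' b'' (opTensor 1 ν'' (Jinv
            ((opTensor γ' D'' ∘ₗ opTensor a' a'' - opTensor a' a'' ∘ₗ opTensor γ' D'') v))))) := by
  intro a' ha' a'' ha'' b' hb' b'' hb''
  have hγa := ContinuousLinearMap.function_commute_of_comp_eq (hγA a' ha')
  have hγb : Function.Commute γ' (J' ∘ b' ∘ J'inv) := Function.Commute.conj hγJ hJ'1 hJ'2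
    (ContinuousLinearMap.function_commute_of_comp_eq (hγA b' hb'))
  have first_factor (x : H') : γ' (a' (J' (b' (J'inv x)))) = J' (b' (J'inv (γ' (a' x)))) := by
    rw [h0' a' ha' b' hb' x]
    exact hγb (a' x)
  refine funext_iff.mp
    (TensorProduct.eq_of_map_add_of_tmul (fun u w ↦ ?_) (fun u w ↦ ?_) fun x y ↦ ?_)
  · simp only [hJinvadd, map_add, hJadd]
  · simp only [hJinvadd, map_add, hJadd]
  · simp only [hJinv, opTensor_tmul, hJ, opTensor_commutator_tmul hγa, one_apply_eq_self]
    rw [first_factor, h1'' a'' ha'' b'' hb'' y]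

/-- tensor product, graded part: If `γ′` is a self-adjoint unitary
grading on `H′` commuting with `A′`, anticommuting with `D′` and commuting with `J′`,
`D″` satisfies the twisted first-order condition on `H″` with twist `ν″` and real
structure `J″`, and `[a′, J′b′J′⁻¹] = 0` on `H′`, then `D = γ′⊗D″` satisfies the twisted
first-order condition on `H′⊗H″` with twist `1⊗ν″` and `J = J′⊗J″`. -/
theorem stmt13 {H' H'' : Type*}
    [NormedAddCommGroup H'] [InnerProductSpace ℂ H'] [CompleteSpace H']
    [NormedAddCommGroup H''] [InnerProductSpace ℂ H''] [CompleteSpace H'']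
    (A' : StarSubalgebra ℂ (H' →L[ℂ] H')) (A'' : StarSubalgebra ℂ (H'' →L[ℂ] H''))
    (J' J'inv : H' → H')
    (hJ'add : ∀ x y, J' (x + y) = J' x + J' y)
    (hJ'conj : ∀ (c : ℂ) (x : H'), J' (c • x) = (starRingEnd ℂ c) • J' x)
    (hJ'1 : ∀ x, J' (J'inv x) = x) (hJ'2 : ∀ x, J'inv (J' x) = x)
    (J'' J''inv : H'' → H'')
    (hJ''add : ∀ x y, J'' (x + y) = J'' x + J'' y)
    (hJ''conj : ∀ (c : ℂ) (x : H''), J'' (c • x) = (starRingEnd ℂ c) • J'' x)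
    (hJ''1 : ∀ x, J'' (J''inv x) = x) (hJ''2 : ∀ x, J''inv (J'' x) = x)
    -- the grading `γ′`: a self-adjoint unitary commuting with `A′` and `J′`,
    -- anticommuting with `D′`
    (γ' D' : H' →L[ℂ] H')
    (hγsa : IsSelfAdjoint γ')
    (hγ2 : γ'.comp γ' = ContinuousLinearMap.id ℂ H')
    (hγA : ∀ a' ∈ A', γ'.comp a' = a'.comp γ')
    (hγD : γ'.comp D' = -(D'.comp γ'))
    (hγJ : ∀ x, γ' (J' x) = J' (γ' x))
    -- zero-order condition on the first factor
    (h0' : ∀ a' ∈ A', ∀ b' ∈ A', ∀ x,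
      a' (J' (b' (J'inv x))) = J' (b' (J'inv (a' x))))
    -- twisted first-order condition for `D″` with twist `ν″` on the second factor
    (D'' ν'' ν''inv : H'' →L[ℂ] H'')
    (hν'' : ν''.comp ν''inv = ContinuousLinearMap.id ℂ H'')
    (hν''2 : ν''inv.comp ν'' = ContinuousLinearMap.id ℂ H'')
    (h1'' : ∀ a'' ∈ A'', ∀ b'' ∈ A'', ∀ y,
      (D'' (a'' (J'' (ν'' (b'' (ν''inv (J''inv y))))))
          - a'' (D'' (J'' (ν'' (b'' (ν''inv (J''inv y)))))))
        = J'' (ν''inv (b'' (ν'' (J''inv (D'' (a'' y) - a'' (D'' y)))))))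
    -- `J = J′⊗J″` and its inverse `J⁻¹ = J′⁻¹⊗J″⁻¹`
    (J Jinv : H' ⊗[ℂ] H'' → H' ⊗[ℂ] H'')
    (hJadd : ∀ u v, J (u + v) = J u + J v)
    (hJinvadd : ∀ u v, Jinv (u + v) = Jinv u + Jinv v)
    (hJ : ∀ (x : H') (y : H''), J (x ⊗ₜ[ℂ] y) = J' x ⊗ₜ[ℂ] J'' y)
    (hJinv : ∀ (x : H') (y : H''), Jinv (x ⊗ₜ[ℂ] y) = J'inv x ⊗ₜ[ℂ] J''inv y) :
    ∀ a' ∈ A', ∀ a'' ∈ A'', ∀ b' ∈ A', ∀ b'' ∈ A'', ∀ v,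
      (opTensor γ' D'' ∘ₗ opTensor a' a'' - opTensor a' a'' ∘ₗ opTensor γ' D'')
          (J (opTensor 1 ν'' (opTensor b' b'' (opTensor 1 ν''inv (Jinv v)))))
        = J (opTensor 1 ν''inv (opTensor b' b'' (opTensor 1 ν'' (Jinv
            ((opTensor γ' D'' ∘ₗ opTensor a' a'' - opTensor a' a'' ∘ₗ opTensor γ' D'') v))))) :=
  stmt13_general A' A'' J' J'inv hJ'1 hJ'2 J'' J''inv γ' hγA hγJ h0' D'' ν'' ν''inv h1'' J Jinv
    hJadd hJinvadd hJ hJinv
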